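/- Fix d ∈ (0,1) and Δ ≥ 0. Let 𝒫₁ be a finitely supported probability mass function on the positive integers with mean L(𝒫₁) = ℓ₁, let ℓ₂ > ℓ₁ be a real number, let N be an integer with N > ℓ₂, and set c = (ℓ₂ − ℓ₁)/(N − ℓ₁) ∈ (0,1). Define 𝒫₂ = (1−c)·𝒫₁ + c·δ_N, where δ_N is the point mass at N. Then L(𝒫₂) = ℓ₂ and h(𝒫₂) ≥ h(𝒫₁) − c·(Δ + R_mem(𝒫₁)). -/

import Mathlib

/-- A finitely supported probability mass function on the positive integers
(represented as a function on `ℕ` vanishing at `0`). -/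
def IsRunPMF (P : ℕ → ℝ) : Prop :=
  (∀ i, 0 ≤ P i) ∧ P 0 = 0 ∧ (Function.support P).Finite ∧ ∑' i : ℕ, P i = 1

/-- `P_{i→j} = C(i,j)·(1−d)^j·d^(i−j)`: the probability that a run of `i` bits
sent through the binary deletion channel with deletion probability `d` yields
`j` surviving bits (equal to `0` for `j > i`). -/
noncomputable def Ptrans (d : ℝ) (i j : ℕ) : ℝ :=
  (i.choose j : ℝ) * (1 - d) ^ j * d ^ (i - j)

/-- The run-length information rate
`R_mem(𝒫) = Σ_{i,j} 𝒫_i·P_{i→j}·log₂(P_{i→j} / Σ_{i'} 𝒫_{i'}·P_{i'→j})`,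
with terms whose numerator vanishes taken to be `0` (they are multiplied by the
vanishing factor `𝒫_i·P_{i→j}`). -/
noncomputable def Rmem (d : ℝ) (P : ℕ → ℝ) : ℝ :=
  ∑' i : ℕ, ∑' j : ℕ, P i * Ptrans d i j *
    Real.logb 2 (Ptrans d i j / (∑' i' : ℕ, P i' * Ptrans d i' j))

/-- The penalized rate `h(𝒫) = R_mem(𝒫) − Δ·Σ_i 𝒫_i·d^i`. -/
noncomputable def hPen (d Δ : ℝ) (P : ℕ → ℝ) : ℝ :=
  Rmem d P - Δ * ∑' i : ℕ, P i * d ^ i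

/-- The mean run length `L(𝒫) = Σ_i i·𝒫_i`. -/
noncomputable def Lmean (P : ℕ → ℝ) : ℝ :=
  ∑' i : ℕ, (i : ℝ) * P i

/-- `I(ℓ)`: the supremum of the penalized rate `h` over finitely supported
pmfs on the positive integers with mean run length `ℓ`. -/
noncomputable def Isup (d Δ ℓ : ℝ) : ℝ :=
  sSup { r | ∃ P : ℕ → ℝ, IsRunPMF P ∧ Lmean P = ℓ ∧ r = hPen d Δ P }

/-!
`R_mem(𝒫)` is the mutual information of the deletion channel `W i j = P_{i→j}` with input law
`𝒫`. It equals `D(W ‖ M | 𝒫) = ∑ᵢ 𝒫ᵢ D(Wᵢ ‖ M)` at the output law `M`; this expression is linear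
in `𝒫` and, by Gibbs' inequality, minimal over `M` at the output law, so mutual information is
concave in the input law. With its nonnegativity this gives `R_mem(𝒫₂) ≥ (1 - c) R_mem(𝒫₁)`.
The penalty term grows by at most `c·d^N ≤ c`, and the mean is linear in the law.
-/

open Finset Real

lemma sub_le_mul_log_div {p q : ℝ} (hp : 0 ≤ p) (hq : 0 ≤ q) (hpq : p ≠ 0 → q ≠ 0) :
    p - q ≤ p * log (p / q) := by
  rcases hp.eq_or_lt with rfl | hp
  · simpa using hq
  have hq : 0 < q := hq.lt_of_ne' (hpq hp.ne')
  calc p - q = p * (1 - (p / q)⁻¹) := by field_simp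
    _ ≤ p * log (p / q) := by gcongr; exact one_sub_inv_le_log_of_pos (div_pos hp hq)

/-- Gibbs' inequality. -/
lemma sum_mul_logb_div_nonneg {ι : Type*} {s : Finset ι} {p q : ι → ℝ} {b : ℝ} (hb : 1 < b)
    (hp : ∀ i ∈ s, 0 ≤ p i) (hq : ∀ i ∈ s, 0 ≤ q i) (hpq : ∀ i ∈ s, p i ≠ 0 → q i ≠ 0)
    (hsum : ∑ i ∈ s, q i ≤ ∑ i ∈ s, p i) :
    0 ≤ ∑ i ∈ s, p i * logb b (p i / q i) := by
  have hlog : ∑ i ∈ s, (p i - q i) ≤ ∑ i ∈ s, p i * log (p i / q i) :=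
    sum_le_sum fun i hi => sub_le_mul_log_div (hp i hi) (hq i hi) (hpq i hi)
  rw [sum_sub_distrib] at hlog
  simp only [logb, ← mul_div_assoc, ← sum_div]
  exact div_nonneg (by linarith) (log_pos hb).le

section Channel

variable {α β : Type*} (s : Finset α) (t : Finset β) (W : α → β → ℝ)

def outputDist (P : α → ℝ) (j : β) : ℝ :=
  ∑ i ∈ s, P i * W i j

/-- The conditional relative entropy `D(W ‖ M | P) = ∑ᵢ Pᵢ · D(Wᵢ ‖ M)`. -/
noncomputable def condRelEntropy (M : β → ℝ) (P : α → ℝ) : ℝ :=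
  ∑ i ∈ s, ∑ j ∈ t, P i * W i j * logb 2 (W i j / M j)

noncomputable def mutualInfo (P : α → ℝ) : ℝ :=
  condRelEntropy s t W (outputDist s W P) P

variable {s t W}

lemma sum_outputDist (hW : ∀ i ∈ s, ∑ j ∈ t, W i j = 1) (P : α → ℝ) :
    ∑ j ∈ t, outputDist s W P j = ∑ i ∈ s, P i := by
  simp only [outputDist]
  rw [sum_comm]
  exact sum_congr rfl fun i hi => by rw [← mul_sum, hW i hi, mul_one]

lemma outputDist_mix (P Q : α → ℝ) (c : ℝ) (j : β) :
    outputDist s W (fun i => (1 - c) * P i + c * Q i) j =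
      (1 - c) * outputDist s W P j + c * outputDist s W Q j := by
  simp only [outputDist, mul_sum, ← sum_add_distrib]
  exact sum_congr rfl fun i _ => by ring

lemma condRelEntropy_mix (M : β → ℝ) (P Q : α → ℝ) (c : ℝ) :
    condRelEntropy s t W M (fun i => (1 - c) * P i + c * Q i) =
      (1 - c) * condRelEntropy s t W M P + c * condRelEntropy s t W M Q := by
  simp only [condRelEntropy, mul_sum, ← sum_add_distrib]
  exact sum_congr rfl fun i _ => sum_congr rfl fun j _ => by ring

variable (hW : ∀ i j, 0 ≤ W i j) {P : α → ℝ} (hP : ∀ i, 0 ≤ P i)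
include hW hP

lemma outputDist_nonneg (j : β) : 0 ≤ outputDist s W P j :=
  sum_nonneg fun i _ => mul_nonneg (hP i) (hW i j)

lemma outputDist_pos {i : α} {j : β} (hi : i ∈ s) (hij : P i * W i j ≠ 0) :
    0 < outputDist s W P j :=
  (mul_nonneg (hP i) (hW i j)).lt_of_ne' hij |>.trans_le <|
    single_le_sum (f := fun i => P i * W i j) (fun i _ => mul_nonneg (hP i) (hW i j)) hi

lemma condRelEntropy_eq_mutualInfo_add {M : β → ℝ}
    (hM : ∀ j ∈ t, outputDist s W P j ≠ 0 → M j ≠ 0) :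
    condRelEntropy s t W M P = mutualInfo s t W P +
      ∑ j ∈ t, outputDist s W P j * logb 2 (outputDist s W P j / M j) := by
  set O := outputDist s W P
  have hterm : ∀ i ∈ s, ∀ j ∈ t, P i * W i j * logb 2 (W i j / M j) =
      P i * W i j * logb 2 (W i j / O j) + P i * W i j * logb 2 (O j / M j) := by
    intro i hi j hj
    by_cases hij : P i * W i j = 0
    · simp [hij]
    have hO : O j ≠ 0 := (outputDist_pos hW hP hi hij).ne'
    rw [logb_div (right_ne_zero_of_mul hij) (hM j hj hO), logb_div (right_ne_zero_of_mul hij) hO,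
      logb_div hO (hM j hj hO)]
    ring
  rw [condRelEntropy, mutualInfo, condRelEntropy,
    sum_congr rfl fun i hi => sum_congr rfl (hterm i hi),
    sum_congr rfl fun i _ => sum_add_distrib, sum_add_distrib]
  congr 1
  rw [sum_comm]
  exact sum_congr rfl fun j _ => (sum_mul ..).symm

lemma mutualInfo_le_condRelEntropy {M : β → ℝ} (hM₀ : ∀ j, 0 ≤ M j)
    (hM : ∀ j ∈ t, outputDist s W P j ≠ 0 → M j ≠ 0)
    (hsum : ∑ j ∈ t, M j ≤ ∑ j ∈ t, outputDist s W P j) :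
    mutualInfo s t W P ≤ condRelEntropy s t W M P := by
  rw [condRelEntropy_eq_mutualInfo_add hW hP hM, le_add_iff_nonneg_right]
  exact sum_mul_logb_div_nonneg one_lt_two (fun j _ => outputDist_nonneg hW hP j)
    (fun j _ => hM₀ j) hM hsum

variable (hW₁ : ∀ i ∈ s, ∑ j ∈ t, W i j = 1)
include hW₁

lemma mutualInfo_nonneg (hP₁ : ∑ i ∈ s, P i ≤ 1) : 0 ≤ mutualInfo s t W P := by
  rw [mutualInfo, condRelEntropy]
  refine sum_nonneg fun i hi => ?_
  simp only [mul_assoc, ← mul_sum]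
  by_cases hPi : P i = 0
  · simp [hPi]
  refine mul_nonneg (hP i) (sum_mul_logb_div_nonneg one_lt_two (fun j _ => hW i j)
    (fun j _ => outputDist_nonneg hW hP j)
    (fun j _ hj => (outputDist_pos hW hP hi (mul_ne_zero hPi hj)).ne') ?_)
  rwa [sum_outputDist hW₁, hW₁ i hi]

lemma mutualInfo_mix_ge {Q : α → ℝ} (hQ : ∀ i, 0 ≤ Q i) (hPQ : ∑ i ∈ s, P i = ∑ i ∈ s, Q i)
    {c : ℝ} (hc₀ : 0 < c) (hc₁ : c < 1) :
    (1 - c) * mutualInfo s t W P + c * mutualInfo s t W Q ≤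
      mutualInfo s t W (fun i => (1 - c) * P i + c * Q i) := by
  set M := outputDist s W (fun i => (1 - c) * P i + c * Q i)
  have hM : ∀ j, M j = (1 - c) * outputDist s W P j + c * outputDist s W Q j :=
    outputDist_mix P Q c
  have hOP := outputDist_nonneg (s := s) hW hP
  have hOQ := outputDist_nonneg (s := s) hW hQ
  have hM₀ : ∀ j, 0 ≤ M j := fun j => by
    rw [hM]; exact add_nonneg (mul_nonneg (by linarith) (hOP j)) (mul_nonneg hc₀.le (hOQ j))
  have hsumM : ∑ j ∈ t, M j = ∑ i ∈ s, P i := by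
    simp only [hM, sum_add_distrib, ← mul_sum, sum_outputDist hW₁, ← hPQ]
    ring
  have hIP : mutualInfo s t W P ≤ condRelEntropy s t W M P := by
    refine mutualInfo_le_condRelEntropy hW hP hM₀ (fun j _ hj => ?_)
      (by rw [hsumM, sum_outputDist hW₁])
    rw [hM]
    exact (add_pos_of_pos_of_nonneg (mul_pos (by linarith) ((hOP j).lt_of_ne' hj))
      (mul_nonneg hc₀.le (hOQ j))).ne'
  have hIQ : mutualInfo s t W Q ≤ condRelEntropy s t W M Q := by
    refine mutualInfo_le_condRelEntropy hW hQ hM₀ (fun j _ hj => ?_)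
      (by rw [hsumM, sum_outputDist hW₁, hPQ])
    rw [hM]
    exact (add_pos_of_nonneg_of_pos (mul_nonneg (by linarith) (hOP j))
      (mul_pos hc₀ ((hOQ j).lt_of_ne' hj))).ne'
  calc (1 - c) * mutualInfo s t W P + c * mutualInfo s t W Q
      ≤ (1 - c) * condRelEntropy s t W M P + c * condRelEntropy s t W M Q :=
        add_le_add (mul_le_mul_of_nonneg_left hIP (by linarith))
          (mul_le_mul_of_nonneg_left hIQ hc₀.le)
    _ = mutualInfo s t W (fun i => (1 - c) * P i + c * Q i) := (condRelEntropy_mix M P Q c).symm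

end Channel

section DeletionChannel

variable {d : ℝ}

lemma Ptrans_nonneg (hd₀ : 0 ≤ d) (hd₁ : d ≤ 1) (i j : ℕ) : 0 ≤ Ptrans d i j := by
  have : 0 ≤ 1 - d := sub_nonneg.2 hd₁
  unfold Ptrans
  positivity

lemma Ptrans_eq_zero_of_lt {i j : ℕ} (h : i < j) : Ptrans d i j = 0 := by
  simp [Ptrans, Nat.choose_eq_zero_of_lt h]

lemma sum_range_Ptrans {i n : ℕ} (h : i < n) : ∑ j ∈ range n, Ptrans d i j = 1 := by
  have hbinom : ∑ j ∈ range (i + 1), Ptrans d i j = 1 := by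
    have := add_pow (1 - d) d i
    rw [sub_add_cancel, one_pow] at this
    rw [this]
    exact sum_congr rfl fun j _ => by unfold Ptrans; ring
  rw [← hbinom]
  exact (sum_subset (range_subset_range.2 h)
    fun j _ hj => Ptrans_eq_zero_of_lt (by simpa using hj)).symm

lemma Rmem_eq_mutualInfo {P : ℕ → ℝ} {n : ℕ} (hP : ∀ i ∉ range n, P i = 0) :
    Rmem d P = mutualInfo (range n) (range n) (Ptrans d) P := by
  have hout : ∀ j, ∑' i, P i * Ptrans d i j = outputDist (range n) (Ptrans d) P j :=
    fun j => tsum_eq_sum fun i hi => by rw [hP i hi, zero_mul]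
  simp only [Rmem, hout, mutualInfo, condRelEntropy]
  refine (tsum_eq_sum fun i hi => by simp [hP i hi]).trans
    (sum_congr rfl fun i hi => tsum_eq_sum fun j hj => ?_)
  rw [Ptrans_eq_zero_of_lt (by simp at hi hj; omega)]
  simp

end DeletionChannel

lemma exists_gt_forall_notMem_range_eq_zero {M : Type*} [Zero M] {P : ℕ → M}
    (hP : (Function.support P).Finite) (N : ℕ) : ∃ n, N < n ∧ ∀ i ∉ range n, P i = 0 := by
  have hP' : ∀ᶠ i in Filter.atTop, P i = 0 := Nat.cofinite_eq_atTop ▸ hP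
  obtain ⟨n, hn⟩ := Filter.eventually_atTop.1 (hP'.and (Filter.eventually_gt_atTop N))
  exact ⟨n, (hn n le_rfl).2, fun i hi => (hn i (by simpa using hi)).1⟩

section PointMassMixture

variable {P : ℕ → ℝ} {c : ℝ} {N : ℕ}

lemma tsum_mul_mix_single {f : ℕ → ℝ} (hP : Summable fun i => f i * P i) :
    ∑' i, f i * ((1 - c) * P i + c * (if i = N then 1 else 0)) =
      (1 - c) * ∑' i, f i * P i + c * f N := by
  have hterm : ∀ i, f i * ((1 - c) * P i + c * (if i = N then 1 else 0)) =
      (1 - c) * (f i * P i) + if i = N then c * f N else 0 := by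
    intro i
    split_ifs with h
    · subst h; ring
    · ring
  simp only [hterm]
  rw [(hP.mul_left _).tsum_add (hasSum_ite_eq N _).summable, hP.tsum_mul_left,
    (hasSum_ite_eq N _).tsum_eq]

lemma tsum_mix_single_mul_pow_le {d : ℝ} (hd₀ : 0 ≤ d) (hd₁ : d ≤ 1) (hc : 0 ≤ c)
    (hP : ∀ i, 0 ≤ P i) (hP_summable : Summable P) :
    ∑' i, ((1 - c) * P i + c * (if i = N then 1 else 0)) * d ^ i ≤ ∑' i, P i * d ^ i + c := by
  have hsummable : Summable fun i => d ^ i * P i :=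
    hP_summable.of_nonneg_of_le (fun i => mul_nonneg (pow_nonneg hd₀ i) (hP i))
      fun i => mul_le_of_le_one_left (hP i) (pow_le_one₀ hd₀ hd₁)
  simp only [mul_comm _ (d ^ _)]
  rw [tsum_mul_mix_single hsummable]
  have : 0 ≤ ∑' i, d ^ i * P i := tsum_nonneg fun i => mul_nonneg (pow_nonneg hd₀ i) (hP i)
  have : d ^ N ≤ 1 := pow_le_one₀ hd₀ hd₁
  nlinarith

lemma Rmem_mix_single_ge {d : ℝ} (hd₀ : 0 ≤ d) (hd₁ : d ≤ 1) (hc₀ : 0 < c) (hc₁ : c < 1)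
    (hP : ∀ i, 0 ≤ P i) {n : ℕ} (hPn : ∀ i ∉ range n, P i = 0) (hP_sum : ∑ i ∈ range n, P i = 1)
    (hN : N < n) :
    (1 - c) * Rmem d P ≤ Rmem d (fun i => (1 - c) * P i + c * (if i = N then 1 else 0)) := by
  have hW := Ptrans_nonneg hd₀ hd₁
  have hW₁ : ∀ i ∈ range n, ∑ j ∈ range n, Ptrans d i j = 1 :=
    fun i hi => sum_range_Ptrans (mem_range.1 hi)
  have hδ : ∀ i, 0 ≤ if i = N then (1 : ℝ) else 0 := fun i => by split_ifs <;> norm_num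
  have hδ_sum : ∑ i ∈ range n, (if i = N then (1 : ℝ) else 0) = 1 := by simp [hN]
  have hmix_n : ∀ i ∉ range n, (1 - c) * P i + c * (if i = N then 1 else 0) = 0 := fun i hi => by
    simp [hPn i hi, show i ≠ N by rintro rfl; exact hi (mem_range.2 hN)]
  rw [Rmem_eq_mutualInfo hPn, Rmem_eq_mutualInfo hmix_n]
  exact (le_add_of_nonneg_right (mul_nonneg hc₀.le (mutualInfo_nonneg hW hδ hW₁ hδ_sum.le))).trans
    (mutualInfo_mix_ge hW hP hW₁ hδ (hP_sum.trans hδ_sum.symm) hc₀ hc₁)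

end PointMassMixture

/-- Let `𝒫₁` be a finitely supported pmf on the positive
integers with mean `ℓ₁`, let `ℓ₂ > ℓ₁`, let `N` be an integer with `N > ℓ₂`,
and set `c = (ℓ₂ − ℓ₁)/(N − ℓ₁)`. Then `𝒫₂ = (1−c)·𝒫₁ + c·δ_N` satisfies
`L(𝒫₂) = ℓ₂` and `h(𝒫₂) ≥ h(𝒫₁) − c·(Δ + R_mem(𝒫₁))`. -/
theorem mix_with_point_mass (d Δ : ℝ) (hd₀ : 0 < d) (hd₁ : d < 1) (hΔ : 0 ≤ Δ)
    (P₁ : ℕ → ℝ) (hP₁ : IsRunPMF P₁) (ℓ₁ ℓ₂ : ℝ) (hℓ₁ : Lmean P₁ = ℓ₁)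
    (h₁₂ : ℓ₁ < ℓ₂) (N : ℕ) (hN : ℓ₂ < (N : ℝ))
    (c : ℝ) (hc : c = (ℓ₂ - ℓ₁) / ((N : ℝ) - ℓ₁))
    (P₂ : ℕ → ℝ) (hP₂ : P₂ = fun i => (1 - c) * P₁ i + c * (if i = N then 1 else 0)) :
    Lmean P₂ = ℓ₂ ∧ hPen d Δ P₂ ≥ hPen d Δ P₁ - c * (Δ + Rmem d P₁) := by
  obtain ⟨hP₁_nonneg, -, hP₁_fin, hP₁_sum⟩ := hP₁
  obtain ⟨n, hNn, hP₁n⟩ := exists_gt_forall_notMem_range_eq_zero hP₁_fin N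
  have hc₀ : 0 < c := hc ▸ div_pos (by linarith) (by linarith)
  have hc₁ : c < 1 := by rw [hc, div_lt_one (by linarith)]; linarith
  subst hP₂
  refine ⟨?_, ?_⟩
  · have hℓ₁' : ∑' i : ℕ, (i : ℝ) * P₁ i = ℓ₁ := hℓ₁
    have hsummable : Summable fun i : ℕ => (i : ℝ) * P₁ i :=
      summable_of_ne_finset_zero (s := range n) fun i hi => by simp [hP₁n i hi]
    rw [Lmean, tsum_mul_mix_single hsummable, hℓ₁', hc]
    field_simp [show (N : ℝ) - ℓ₁ ≠ 0 by linarith]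
    ring
  · have hR := Rmem_mix_single_ge hd₀.le hd₁.le hc₀ hc₁ hP₁_nonneg hP₁n
      ((tsum_eq_sum hP₁n).symm.trans hP₁_sum) hNn
    have hpen := tsum_mix_single_mul_pow_le (N := N) hd₀.le hd₁.le hc₀.le hP₁_nonneg
      (summable_of_ne_finset_zero hP₁n)
    rw [hPen, hPen, ge_iff_le]
    nlinarith [mul_le_mul_of_nonneg_left hpen hΔ]
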